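/- arXiv:2001.08344 — 2 statements merged into one kernel-verified Lean document; each statement's English description precedes it below -/
import Mathlib

section
/- For all positive constants a, b and all z > 0, (b/(a+b))·e^{az} + (a/(a+b))·e^{-bz} ≥ 1. -/
open Real

lemma one_le_mul_exp_add_mul_exp {u v x y : ℝ} (hu : 0 ≤ u) (hv : 0 ≤ v) (huv : u + v = 1)
    (hmean : u * x + v * y = 0) : 1 ≤ u * exp x + v * exp y := by
  simpa [hmean] using convexOn_exp.2 (Set.mem_univ x) (Set.mem_univ y) hu hv huv

theorem stmt0_general (a b z : ℝ) (ha : 0 < a) (hb : 0 < b) :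
    b / (a + b) * Real.exp (a * z) + a / (a + b) * Real.exp (-b * z) ≥ 1 := by
  have hab : 0 < a + b := add_pos ha hb
  refine one_le_mul_exp_add_mul_exp (by positivity) (by positivity) ?_ ?_
  · field_simp
    ring
  · field_simp
    ring

theorem stmt0 (a b z : ℝ) (ha : 0 < a) (hb : 0 < b) (hz : 0 < z) :
    b / (a + b) * Real.exp (a * z) + a / (a + b) * Real.exp (-b * z) ≥ 1 :=
  stmt0_general a b z ha hb
end

section
/- Let M_Y(s) = E[e^{sY}] for a nonnegative random variable Y with 0 < E[Y], and let c > λE[Y] > 0, ρ > 0, β > 0. Then the equation ρ + β = cγ − λ(1 − M_Y(−γ)) has a unique positive solution γ. -/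
/-!
For `γ ≥ 0` the Laplace transform `L γ = E[exp (-γY)]` is antitone and, since
`1 - exp (-t) ≤ t`, satisfies `L a - L b ≤ (b - a) E[Y]` for `a ≤ b`. Hence
`h γ = cγ - λ(1 - L γ)` is continuous on `[0, ∞)`, vanishes at `0`, and grows at least
linearly with slope `c - λE[Y] > 0`; the intermediate value theorem and strict
monotonicity give exactly one positive solution of `h γ = ρ + β`.
-/

open MeasureTheory Set

lemma existsUnique_pos_eq_of_linear_growth {f : ℝ → ℝ} {K y : ℝ} (hK : 0 < K)
    (hf : ContinuousOn f (Ici 0)) (hf0 : f 0 = 0)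
    (hgrowth : ∀ a b, 0 ≤ a → a ≤ b → f a + K * (b - a) ≤ f b) (hy : 0 < y) :
    ∃! x, 0 < x ∧ y = f x := by
  have hmono : StrictMonoOn f (Ici 0) := fun a ha b _ hab => by
    nlinarith [hgrowth a b ha hab.le, mul_pos hK (sub_pos.2 hab)]
  have hyK : y ≤ f (y / K) := by
    have := hgrowth 0 (y / K) le_rfl (by positivity)
    rwa [hf0, sub_zero, mul_div_cancel₀ _ hK.ne', zero_add] at this
  obtain ⟨x, hx, hfx⟩ := intermediate_value_Icc (div_nonneg hy.le hK.le)
    (hf.mono Icc_subset_Ici_self) ⟨by rw [hf0]; exact hy.le, hyK⟩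
  have hx0 : 0 < x := hx.1.lt_of_ne fun h => by rw [← h, hf0] at hfx; exact hy.ne' hfx.symm
  refine ⟨x, ⟨hx0, hfx.symm⟩, fun x' ⟨hx'0, hfx'⟩ => ?_⟩
  exact hmono.injOn (mem_Ici.2 hx'0.le) (mem_Ici.2 hx.1) (hfx'.symm.trans hfx.symm)

lemma Real.exp_neg_mul_sub_exp_neg_mul_le {a b y : ℝ} (ha : 0 ≤ a) (hab : a ≤ b) (hy : 0 ≤ y) :
    Real.exp (-(a * y)) - Real.exp (-(b * y)) ≤ (b - a) * y := by
  have hsplit : Real.exp (-(b * y)) = Real.exp (-(a * y)) * Real.exp (-((b - a) * y)) := by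
    rw [← Real.exp_add]; ring_nf
  have hle_one : Real.exp (-(a * y)) ≤ 1 := Real.exp_le_one_iff.2 (by nlinarith)
  have hlin : 1 - (b - a) * y ≤ Real.exp (-((b - a) * y)) := by
    linarith [Real.add_one_le_exp (-((b - a) * y))]
  have ht : 0 ≤ (b - a) * y := mul_nonneg (sub_nonneg.2 hab) hy
  rw [hsplit]
  nlinarith [Real.exp_pos (-(a * y)), Real.exp_pos (-((b - a) * y))]

section LaplaceTransform

variable {Ω : Type*} [MeasurableSpace Ω] {μ : Measure Ω} {Y : Ω → ℝ}

lemma integrable_exp_neg_mul [IsFiniteMeasure μ] (hY : AEStronglyMeasurable Y μ)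
    (hY0 : ∀ ω, 0 ≤ Y ω) {γ : ℝ} (hγ : 0 ≤ γ) :
    Integrable (fun ω => Real.exp (-(γ * Y ω))) μ := by
  refine (integrable_const (1 : ℝ)).mono' ?_ (Filter.Eventually.of_forall fun ω => ?_)
  · exact Real.continuous_exp.comp_aestronglyMeasurable (hY.const_mul γ).neg
  · rw [Real.norm_eq_abs, abs_of_pos (Real.exp_pos _)]
    exact Real.exp_le_one_iff.2 (neg_nonpos.2 (mul_nonneg hγ (hY0 ω)))

lemma antitoneOn_integral_exp_neg_mul [IsFiniteMeasure μ] (hY : AEStronglyMeasurable Y μ)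
    (hY0 : ∀ ω, 0 ≤ Y ω) :
    AntitoneOn (fun γ => ∫ ω, Real.exp (-(γ * Y ω)) ∂μ) (Ici 0) := by
  intro a ha b _ hab
  refine integral_mono (integrable_exp_neg_mul hY hY0 (ha.out.trans hab))
    (integrable_exp_neg_mul hY hY0 ha.out) fun ω => ?_
  exact Real.exp_le_exp.2 (by nlinarith [hY0 ω])

lemma integral_exp_neg_mul_sub_le [IsFiniteMeasure μ] (hYi : Integrable Y μ)
    (hY0 : ∀ ω, 0 ≤ Y ω) {a b : ℝ} (ha : 0 ≤ a) (hab : a ≤ b) :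
    (∫ ω, Real.exp (-(a * Y ω)) ∂μ) - ∫ ω, Real.exp (-(b * Y ω)) ∂μ
      ≤ (b - a) * ∫ ω, Y ω ∂μ := by
  have hia := integrable_exp_neg_mul hYi.1 hY0 ha
  have hib := integrable_exp_neg_mul hYi.1 hY0 (ha.trans hab)
  rw [← integral_sub hia hib, ← integral_const_mul]
  exact integral_mono (hia.sub hib) (hYi.const_mul _) fun ω =>
    Real.exp_neg_mul_sub_exp_neg_mul_le ha hab (hY0 ω)

lemma continuousOn_integral_exp_neg_mul [IsFiniteMeasure μ] (hYi : Integrable Y μ)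
    (hY0 : ∀ ω, 0 ≤ Y ω) :
    ContinuousOn (fun γ => ∫ ω, Real.exp (-(γ * Y ω)) ∂μ) (Ici 0) := by
  have hEY : 0 ≤ ∫ ω, Y ω ∂μ := integral_nonneg hY0
  have hlip : LipschitzOnWith (Real.toNNReal (∫ ω, Y ω ∂μ))
      (fun γ => ∫ ω, Real.exp (-(γ * Y ω)) ∂μ) (Ici 0) := by
    refine LipschitzOnWith.of_dist_le_mul fun a ha b hb => ?_
    rw [Real.dist_eq, Real.dist_eq, Real.coe_toNNReal _ hEY, mul_comm]
    have hanti := antitoneOn_integral_exp_neg_mul hYi.1 hY0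
    rcases le_total a b with hab | hba
    · rw [abs_of_nonneg (sub_nonneg.2 (hanti ha hb hab)), abs_of_nonpos (sub_nonpos.2 hab)]
      linarith [integral_exp_neg_mul_sub_le hYi hY0 ha.out hab]
    · rw [abs_of_nonpos (sub_nonpos.2 (hanti hb ha hba)), abs_of_nonneg (sub_nonneg.2 hba)]
      linarith [integral_exp_neg_mul_sub_le hYi hY0 hb.out hba]
  exact hlip.continuousOn

end LaplaceTransform

theorem stmt6_general {Ω : Type*} [MeasurableSpace Ω] (μ : Measure Ω) [IsProbabilityMeasure μ]
    (Y : Ω → ℝ) (hY0 : ∀ ω, 0 ≤ Y ω) (hYi : Integrable Y μ)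
    (lam ρ β c : ℝ) (hlam : 0 < lam) (hρ : 0 < ρ) (hβ : 0 < β)
    (hc : lam * ∫ ω, Y ω ∂μ < c) :
    ∃! γ : ℝ, 0 < γ ∧
      ρ + β = c * γ - lam * (1 - ∫ ω, Real.exp (-(γ * Y ω)) ∂μ) := by
  refine existsUnique_pos_eq_of_linear_growth (sub_pos.2 hc) ?_ (by simp) (fun a b ha hab => ?_)
    (add_pos hρ hβ)
  · exact (continuousOn_const.mul continuousOn_id).sub
      (continuousOn_const.mul (continuousOn_const.sub (continuousOn_integral_exp_neg_mul hYi hY0)))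
  · nlinarith [integral_exp_neg_mul_sub_le hYi hY0 ha hab]

theorem stmt6 {Ω : Type*} [MeasurableSpace Ω] (μ : Measure Ω) [IsProbabilityMeasure μ]
    (Y : Ω → ℝ) (hYm : Measurable Y) (hY0 : ∀ ω, 0 ≤ Y ω) (hYi : Integrable Y μ)
    (hEY : 0 < ∫ ω, Y ω ∂μ)
    (lam ρ β c : ℝ) (hlam : 0 < lam) (hρ : 0 < ρ) (hβ : 0 < β)
    (hc : lam * ∫ ω, Y ω ∂μ < c) :
    ∃! γ : ℝ, 0 < γ ∧
      ρ + β = c * γ - lam * (1 - ∫ ω, Real.exp (-(γ * Y ω)) ∂μ) :=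
  stmt6_general μ Y hY0 hYi lam ρ β c hlam hρ hβ hc
end
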